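/- Let O be a complete DVR with finite residue field of characteristic p, let G be a profinite group, and let U and V be O[G]-modules, free of finite rank over O. Let S be the set of continuous characters ψ : G → O^× such that Hom_{O[G]}(U, V ⊗_O O(ψ)) ≠ 0, where ψ ranges over characters trivial on a fixed open subgroup (unramified-type characters determined by the image of a fixed element Frob). Suppose that whenever Hom_{O[G]}(U, V ⊗ ψ) ≠ 0, there exist Jordan–Hölder factors W of U ⊗ Frac(O) and Z of V ⊗ Frac(O) with W ≅ Z ⊗ ψ. Then, since for each of the finitely many pairs (W, Z) the character ψ is determined by det W / det Z up to a root of unity of bounded order, the set S is finite. -/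

import Mathlib

/-!
A character trivial on `H` is determined by its value at `Frob`. If `W i ≅ Z i ⊗ ψ`, taking
determinants at `Frob` gives `ψ(Frob) ^ dim Z i = det W i(Frob) / det Z i(Frob)`, so `ψ(Frob)`
is one of finitely many roots of a fixed element of `K`, for each of the finitely many `i`.
-/

open Module

theorem MonoidHom.injOn_apply_of_closure_eq_top {G M : Type*} [Group G] [Monoid M]
    {a : G} {H : Subgroup G} (hgen : Subgroup.closure ({a} ∪ (H : Set G)) = ⊤) :
    Set.InjOn (fun ψ : G →* M => ψ a) {ψ | ∀ h ∈ H, ψ h = 1} := by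
  intro ψ₁ h₁ ψ₂ h₂ heq
  refine MonoidHom.eq_of_eqOn_dense hgen ?_
  rintro x (rfl | hx)
  · exact heq
  · exact (h₁ x hx).trans (h₂ x hx).symm

theorem LinearMap.det_eq_pow_finrank_mul_det_of_intertwine {A M N : Type*} [CommRing A]
    [AddCommGroup M] [Module A M] [AddCommGroup N] [Module A N] [Module.Free A N]
    (e : M ≃ₗ[A] N) {f : Module.End A M} {f' : Module.End A N} (c : A)
    (h : ∀ x, e (f x) = c • f' (e x)) :
    LinearMap.det f = c ^ finrank A N * LinearMap.det f' := by
  calc LinearMap.det f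
      = LinearMap.det ((e.symm : N →ₗ[A] M) ∘ₗ (c • f') ∘ₗ (e.symm.symm : M →ₗ[A] N)) := by
        congr 1
        ext x
        simp [← h]
    _ = LinearMap.det (c • f') := LinearMap.det_conj _ _
    _ = c ^ finrank A N * LinearMap.det f' := LinearMap.det_smul _ _

namespace Representation

variable {k G M N : Type*} [Group G] [AddCommGroup M] [AddCommGroup N]

theorem isUnit_det [CommRing k] [Module k M] (ρ : Representation k G M) (g : G) :
    IsUnit (LinearMap.det (ρ g)) := by
  rw [← ρ.asGroupHom_apply]
  exact (ρ.asGroupHom g).isUnit.map _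

theorem pow_finrank_eq_det_div_det_of_intertwine [Field k] [Module k M] [Module k N]
    (ρ : Representation k G M) (σ : Representation k G N) (e : M ≃ₗ[k] N) (χ : G → k)
    (h : ∀ g x, e (ρ g x) = χ g • σ g (e x)) (g : G) :
    χ g ^ finrank k N = LinearMap.det (ρ g) / LinearMap.det (σ g) := by
  rw [eq_div_iff (σ.isUnit_det g).ne_zero,
    LinearMap.det_eq_pow_finrank_mul_det_of_intertwine e (χ g) (h g)]

end Representation

theorem Polynomial.finite_setOf_pow_eq {R : Type*} [CommRing R] [IsDomain R] {n : ℕ}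
    (hn : 0 < n) (a : R) : {x : R | x ^ n = a}.Finite := by
  classical
  refine (nthRoots n a).toFinset.finite_toSet.subset fun x hx => ?_
  simpa [mem_nthRoots hn] using hx

theorem stmt10_general
    {O : Type*} [CommRing O]
    {G : Type*} [Group G] (Frob : G) (H : Subgroup G)
    (hgen : Subgroup.closure ({Frob} ∪ (H : Set G)) = ⊤)
    (K : Type*) [Field K] [Algebra O K] [IsFractionRing O K]
    -- the (finitely many) Jordan–Hölder factors of `U ⊗ K` and `V ⊗ K`
    {ι : Type*} [Finite ι] (nW nZ : ι → ℕ) (hnZ : ∀ i, 0 < nZ i)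
    (W : (i : ι) → Representation K G (Fin (nW i) → K))
    (Z : (i : ι) → Representation K G (Fin (nZ i) → K))
    (S : Set (G →* Oˣ))
    (hS : ∀ ψ ∈ S, (∀ h ∈ H, ψ h = 1) ∧
        ∃ i, ∃ e : (Fin (nW i) → K) ≃ₗ[K] (Fin (nZ i) → K),
          ∀ g x, e (W i g x) = algebraMap O K (ψ g : O) • Z i g (e x)) :
    S.Finite := by
  let χ : (G →* Oˣ) → K := fun ψ => algebraMap O K (ψ Frob : O)
  have hinj : S.InjOn χ := fun ψ₁ h₁ ψ₂ h₂ heq =>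
    MonoidHom.injOn_apply_of_closure_eq_top hgen (hS ψ₁ h₁).1 (hS ψ₂ h₂).1
      (Units.ext (IsFractionRing.injective O K heq))
  have hmaps : S.MapsTo χ
      (⋃ i, {x | x ^ nZ i = LinearMap.det (W i Frob) / LinearMap.det (Z i Frob)}) := by
    intro ψ hψ
    obtain ⟨-, i, e, he⟩ := hS ψ hψ
    refine Set.mem_iUnion.2 ⟨i, ?_⟩
    simpa [finrank_fin_fun] using
      (W i).pow_finrank_eq_det_div_det_of_intertwine (Z i) e _ he Frob
  exact ((Set.finite_iUnion fun i => Polynomial.finite_setOf_pow_eq (hnZ i) _).subset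
    hmaps.image_subset).of_finite_image hinj

/-- Let `O` be a complete DVR with finite residue field of
characteristic `p`, `G` a (Galois) group with a distinguished element `Frob` and a fixed
(open) subgroup `H` such that `G` is (topologically) generated by `Frob` together with `H`
— so that an unramified-type character `ψ : G → O^×` trivial on `H` is determined by
`ψ(Frob)`.  Let `U, V` be `O[G]`-modules free of finite rank, and let `S` be the set of
such characters `ψ` with `Hom_{O[G]}(U, V ⊗ O(ψ)) ≠ 0`.  Suppose that whenever this Hom is
nonzero there are Jordan–Hölder factors `W` of `U ⊗ Frac O` and `Z` of `V ⊗ Frac O`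
(taken from the finite families below) with `W ≅ Z ⊗ ψ`.  Then `S` is finite. -/
theorem stmt10 {p : ℕ} [Fact p.Prime]
    {O : Type*} [CommRing O] [IsDomain O] [IsDiscreteValuationRing O]
    [IsAdicComplete (IsLocalRing.maximalIdeal O) O]
    [Finite (IsLocalRing.ResidueField O)] (hp : CharP (IsLocalRing.ResidueField O) p)
    {G : Type*} [Group G] (Frob : G) (H : Subgroup G)
    (hgen : Subgroup.closure ({Frob} ∪ (H : Set G)) = ⊤)
    (K : Type*) [Field K] [Algebra O K] [IsFractionRing O K]
    -- the (finitely many) Jordan–Hölder factors of `U ⊗ K` and `V ⊗ K`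
    {ι : Type*} [Finite ι] (nW nZ : ι → ℕ) (hnZ : ∀ i, 0 < nZ i)
    (W : (i : ι) → Representation K G (Fin (nW i) → K))
    (Z : (i : ι) → Representation K G (Fin (nZ i) → K))
    (S : Set (G →* Oˣ))
    (hS : ∀ ψ ∈ S, (∀ h ∈ H, ψ h = 1) ∧
        ∃ i, ∃ e : (Fin (nW i) → K) ≃ₗ[K] (Fin (nZ i) → K),
          ∀ g x, e (W i g x) = algebraMap O K (ψ g : O) • Z i g (e x)) :
    S.Finite :=
  stmt10_general Frob H hgen K nW nZ hnZ W Z S hS
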